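/- arXiv:2503.09133 — 2 statements merged into one kernel-verified Lean document; each statement's English description precedes it below -/
import Mathlib

section
/- For A ∈ SL₂(ℂ), the matrix A + (Aᴴ)⁻¹ is a positive real scalar multiple of the unitary part of the polar decomposition of A, up to sign: if A = PU with P positive-definite Hermitian, det P = 1, U ∈ SU(2), then A + (Aᴴ)⁻¹ = (P + P⁻¹)U, and P + P⁻¹ = (tr P)·Id (since det P = 1), so A + (Aᴴ)⁻¹ = (tr P)·U with tr P ≥ 2 > 0. -/
open Matrix
open scoped ComplexOrder

/-- For `A ∈ SL₂(ℂ)` with right polar decomposition `A = P·U`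
(`P` positive-definite Hermitian with `det P = 1`, `U ∈ SU(2)`), one has
`A + (Aᴴ)⁻¹ = (P + P⁻¹)·U`, `P + P⁻¹ = (tr P)·1`, hence
`A + (Aᴴ)⁻¹ = (tr P)·U`, where `tr P` is real and `tr P ≥ 2 > 0`. -/
theorem coamoeba_formula
    (A P U : Matrix (Fin 2) (Fin 2) ℂ) (hA : A.det = 1)
    (hP : P.PosDef) (hPdet : P.det = 1)
    (hU : U * Uᴴ = 1) (hUdet : U.det = 1)
    (hpol : A = P * U) :
    A + (Aᴴ)⁻¹ = (P + P⁻¹) * U ∧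
    P + P⁻¹ = P.trace • (1 : Matrix (Fin 2) (Fin 2) ℂ) ∧
    A + (Aᴴ)⁻¹ = P.trace • U ∧
    (P.trace).im = 0 ∧ 2 ≤ (P.trace).re := by
  have hPh := hP.1
  have hUH : (Uᴴ)⁻¹ = U := inv_eq_left_inv hU
  have hAH : Aᴴ = Uᴴ * P := by rw [hpol, conjTranspose_mul, hPh.eq]
  have h1 : A + (Aᴴ)⁻¹ = (P + P⁻¹) * U := by
    rw [hAH, Matrix.mul_inv_rev, hUH, add_mul, hpol]
  have hPinv : P⁻¹ = P.adjugate := by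
    rw [Matrix.inv_def, hPdet]
    simp
  have h2 : P + P⁻¹ = P.trace • (1 : Matrix (Fin 2) (Fin 2) ℂ) := by
    rw [hPinv]
    ext i j
    fin_cases i <;> fin_cases j <;>
      simp [adjugate_fin_two, trace_fin_two, Matrix.one_apply] <;> ring
  have h3 : A + (Aᴴ)⁻¹ = P.trace • U := by
    rw [h1, h2, smul_mul_assoc, one_mul]
  -- diagonal entries are positive
  have hdiag : ∀ i, 0 < P i i := fun i => by
    have h := hP.dotProduct_mulVec_pos (x := Pi.single i 1) (by
      simp [Function.ne_iff])
    simpa [dotProduct, mulVec, Pi.single_apply, Finset.sum_ite_eq,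
      Fin.sum_univ_two] using h
  have h00 := hdiag 0
  have h11 := hdiag 1
  rw [Complex.lt_def] at h00 h11
  have hsym : P 1 0 = star (P 0 1) := by
    have := congrFun (congrFun hPh.eq 1) 0
    simpa [conjTranspose_apply] using this.symm
  have hdet := hPdet
  rw [det_fin_two, hsym] at hdet
  have hre := congrArg Complex.re hdet
  have him0 : (P 0 0).im = 0 := by simpa using h00.2.symm
  have him1 : (P 1 1).im = 0 := by simpa using h11.2.symm
  simp [Complex.mul_re, Complex.mul_im, him0, him1, Complex.star_def] at hre
  refine ⟨h1, h2, h3, ?_, ?_⟩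
  · simp [trace_fin_two, him0, him1]
  · have h00' : 0 < (P 0 0).re := by simpa using h00.1
    have h11' : 0 < (P 1 1).re := by simpa using h11.1
    have hsq : 0 ≤ (P 0 1).re ^ 2 + (P 0 1).im ^ 2 := by positivity
    rw [trace_fin_two]
    simp only [Complex.add_re]
    nlinarith [hre, h00', h11', sq_nonneg ((P 0 0).re - (P 1 1).re), sq_nonneg (P 0 1).re, sq_nonneg (P 0 1).im]
end

section
/- Let A(t) be a 2×2 matrix over the Hahn series field with det A(t) = 1, satisfying the quadric equation t²·det(A(t)) = (tr A(t))², and write A(t) = B·t^α + o(t^α) with B ≠ 0. Then α ≥ 1; moreover if α = 1 then tr B = ±1, and if α > 1 then tr B = 0. -/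
open Matrix

/-- `𝕂`: Hahn series over `ℂ` with real exponents, in the variable `s = t⁻¹`;
so `t` itself is the Hahn series `single (-1) 1`. -/
noncomputable abbrev HahnK : Type := HahnSeries ℝ ℂ

/-- The uniformizer `t` (recall `t → ∞`, i.e. `t = s⁻¹`). -/
noncomputable def tK : HahnK := HahnSeries.single (-1 : ℝ) (1 : ℂ)

/-- `A = B·tᵅ + o(tᵅ)` as `t → ∞` (exponent `α` maximal, i.e. `s`-exponent `-α`
minimal). -/
def MatHasLeadingTerm (A : Matrix (Fin 2) (Fin 2) HahnK) (α : ℝ)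
    (B : Matrix (Fin 2) (Fin 2) ℂ) : Prop :=
  (∀ i j : Fin 2, ∀ γ : ℝ, γ < -α → (A i j).coeff γ = 0) ∧
  (∀ i j : Fin 2, (A i j).coeff (-α) = B i j)

lemma mul_coeff_vanish_aux (f g : HahnSeries ℝ ℂ) (a b : ℝ)
    (hf : ∀ γ < a, f.coeff γ = 0) (hg : ∀ γ < b, g.coeff γ = 0) :
    (∀ γ < a + b, (f * g).coeff γ = 0) ∧
      (f * g).coeff (a + b) = f.coeff a * g.coeff b := by
  have key : ∀ i j : ℝ, f.coeff i ≠ 0 → g.coeff j ≠ 0 → a + b ≤ i + j := by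
    intro i j hi hj
    have h1 : a ≤ i := le_of_not_gt fun h => hi (hf i h)
    have h2 : b ≤ j := le_of_not_gt fun h => hj (hg j h)
    linarith
  constructor
  · intro γ hγ
    rw [HahnSeries.coeff_mul]
    apply Finset.sum_eq_zero
    intro ij hij
    rw [Finset.mem_addAntidiagonal] at hij
    exact absurd (hij.2.2 ▸ key ij.1 ij.2 hij.1 hij.2.1) (not_le.mpr hγ)
  · rw [HahnSeries.coeff_mul]
    rw [Finset.sum_eq_single (a, b)]
    · intro ij hij hne
      rw [Finset.mem_addAntidiagonal] at hij
      by_contra hz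
      have h1 : a ≤ ij.1 := le_of_not_gt fun h => hz (by rw [hf ij.1 h, zero_mul])
      have h2 : b ≤ ij.2 := le_of_not_gt fun h => hz (by rw [hg ij.2 h, mul_zero])
      have := hij.2.2
      have e1 : ij.1 = a := by linarith
      have e2 : ij.2 = b := by linarith
      exact hne (Prod.ext e1 e2)
    · intro h
      rw [Finset.mem_addAntidiagonal] at h
      push_neg at h
      by_cases h1 : f.coeff a = 0
      · rw [h1, zero_mul]
      by_cases h2 : g.coeff b = 0
      · rw [h2, mul_zero]
      exact absurd (h h1 h2) (fun hne => hne rfl)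

/-- If `det A(t) = 1`, `t²·det A(t) = (tr A(t))²`, and `A(t) = B·tᵅ + o(tᵅ)` with
`B ≠ 0`, then `α ≥ 1`; if `α = 1` then `tr B = ±1`, and if `α > 1` then
`tr B = 0`. -/
theorem quadric_leading_term_constraints
    (A : Matrix (Fin 2) (Fin 2) HahnK) (hdet : A.det = 1)
    (hquad : tK ^ 2 * A.det = A.trace ^ 2)
    (α : ℝ) (B : Matrix (Fin 2) (Fin 2) ℂ) (hB : B ≠ 0)
    (hlead : MatHasLeadingTerm A α B) :
    1 ≤ α ∧ (α = 1 → B.trace = 1 ∨ B.trace = -1) ∧ (1 < α → B.trace = 0) := by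
  obtain ⟨hsmall, hcoef⟩ := hlead
  set T := A.trace with hTdef
  have hT0 : ∀ γ < -α, T.coeff γ = 0 := by
    intro γ hγ
    rw [hTdef, Matrix.trace_fin_two, HahnSeries.coeff_add, hsmall 0 0 γ hγ,
      hsmall 1 1 γ hγ, add_zero]
  have hTB : T.coeff (-α) = B.trace := by
    rw [hTdef, Matrix.trace_fin_two, HahnSeries.coeff_add, hcoef 0 0, hcoef 1 1,
      Matrix.trace_fin_two]
  have hsq : (HahnSeries.single (-2 : ℝ) (1 : ℂ) : HahnK) = T * T := by
    have : tK ^ 2 = HahnSeries.single (-2 : ℝ) (1 : ℂ) := by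
      rw [sq, tK, HahnSeries.single_mul_single]
      norm_num
    rw [hdet, mul_one, this] at hquad
    rw [hquad, sq]
  obtain ⟨hvan, hmid⟩ := mul_coeff_vanish_aux T T (-α) (-α) hT0 hT0
  have hα : 1 ≤ α := by
    by_contra h
    push_neg at h
    have h2 : (-2 : ℝ) < -α + -α := by linarith
    have := hvan (-2) h2
    rw [← hsq, HahnSeries.coeff_single_same] at this
    exact one_ne_zero this
  refine ⟨hα, ?_, ?_⟩
  · intro h1
    subst h1
    have : (HahnSeries.single (-2 : ℝ) (1 : ℂ) : HahnK).coeff (-1 + -1) =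
        B.trace * B.trace := by
      rw [hsq, hmid, hTB]
    rw [show (-1 : ℝ) + -1 = -2 by norm_num, HahnSeries.coeff_single_same] at this
    exact (mul_self_eq_one_iff.mp this.symm)
  · intro h1
    have hne : (-α : ℝ) + -α ≠ -2 := by intro h; linarith [h]
    have : (HahnSeries.single (-2 : ℝ) (1 : ℂ) : HahnK).coeff (-α + -α) =
        B.trace * B.trace := by
      rw [hsq, hmid, hTB]
    rw [HahnSeries.coeff_single_of_ne hne] at this
    exact mul_self_eq_zero.mp this.symm
end
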